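/- arXiv:2007.10924 — 8 statements merged into one kernel-verified Lean document; each statement's English description precedes it below -/
import Mathlib

section
/- Let n ≥ 1 and let f : D → {0,1} be a non-constant n-bit partial Boolean function. Then f can be computed exactly by a quantum 1-query algorithm if and only if there exists a vector β = (β_0, β_1, …, β_n) ∈ ℝ^{n+1} with β_i ≥ 0 for all i, β_0 + β_1 + ⋯ + β_n = 1, and β_0 + Σ_{i=1}^{n} β_i·(−1)^{x_i ⊕ y_i} = 0 for every x ∈ D with f(x) = 0 and every y ∈ D with f(y) = 1. -/
open scoped BigOperators

noncomputable section

/-- The quantum oracle `O_x`, as a diagonal matrix acting on `ℂ^{(n+1)m}`, whose basis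
vectors are indexed by pairs `(i, j)` with `i ∈ {0, 1, …, n}` (encoded as `Option (Fin n)`,
`none` playing the role of `0`) and `j ∈ {1, …, m}`. -/
def oracleMat (n m : ℕ) (x : Fin n → Bool) :
    Matrix (Option (Fin n) × Fin m) (Option (Fin n) × Fin m) ℂ :=
  Matrix.diagonal fun p =>
    match p.1 with
    | none => 1
    | some i => if x i then -1 else 1

/-- Squared Euclidean norm of a complex vector. -/
def vecNormSq {ι : Type*} [Fintype ι] (v : ι → ℂ) : ℝ :=
  ∑ i, Complex.normSq (v i)

/-- The partial Boolean function `f` with domain (promised set) `D` is computed exactly by a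
quantum 1-query algorithm: there are `m ≥ 1`, a unit vector `ψ`, unitaries `U₀, U₁` and an
orthogonal projection `P` with `‖P U₁ O_x U₀ ψ‖² = f x` for all `x ∈ D`. -/
def ComputedExactly1 {n : ℕ} (D : Set (Fin n → Bool)) (f : (Fin n → Bool) → Bool) : Prop :=
  ∃ m : ℕ, 1 ≤ m ∧
    ∃ ψ : Option (Fin n) × Fin m → ℂ, vecNormSq ψ = 1 ∧
      ∃ U₀ U₁ P : Matrix (Option (Fin n) × Fin m) (Option (Fin n) × Fin m) ℂ,
        U₀ ∈ Matrix.unitaryGroup (Option (Fin n) × Fin m) ℂ ∧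
        U₁ ∈ Matrix.unitaryGroup (Option (Fin n) × Fin m) ℂ ∧
        P.IsHermitian ∧ P * P = P ∧
        ∀ x ∈ D, vecNormSq ((P * U₁ * oracleMat n m x * U₀).mulVec ψ) = if f x then 1 else 0

/-- A multilinear polynomial: degree at most 1 in each variable. -/
def IsMultilinear {n : ℕ} (p : MvPolynomial (Fin n) ℝ) : Prop :=
  ∀ i, p.degreeOf i ≤ 1

/-- `p` represents the partial Boolean function `f` on the promised set `D`. -/
def Represents {n : ℕ} (p : MvPolynomial (Fin n) ℝ)
    (D : Set (Fin n → Bool)) (f : (Fin n → Bool) → Bool) : Prop :=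
  ∀ x ∈ D, MvPolynomial.eval (fun i => if x i then (1 : ℝ) else 0) p = if f x then 1 else 0

/-- `f` (with domain `D`) depends on `k` bits: `k` is the minimum, over all multilinear
polynomials representing `f`, of the number of variables occurring. -/
def DependsOnBits {n : ℕ} (D : Set (Fin n → Bool)) (f : (Fin n → Bool) → Bool) (k : ℕ) : Prop :=
  IsLeast {c | ∃ p : MvPolynomial (Fin n) ℝ,
    IsMultilinear p ∧ Represents p D f ∧ p.vars.card = c} k

/-- The Fourier basis vector `|F(x)⟩₁ = (1, (−1)^{x_1}, …, (−1)^{x_n})`. -/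
def fourierVec {n : ℕ} (x : Fin n → Bool) : Option (Fin n) → ℂ :=
  fun o => match o with
  | none => 1
  | some i => if x i then -1 else 1

/-- The polynomial basis vector `(1, x₁, …, xₙ)`. -/
def polyVec {n : ℕ} (x : Fin n → Bool) : Option (Fin n) → ℝ :=
  fun o => match o with
  | none => 1
  | some i => if x i then 1 else 0

/-- A degree-1 SOS complex representation matrix of `f` and its negation, given by the
rows `α l` (`l < p` for `f`, `p ≤ l < p + q` for the negation of `f`). -/
def SOSRep {n : ℕ} (D : Set (Fin n → Bool)) (f : (Fin n → Bool) → Bool)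
    (p q : ℕ) (α : Fin (p + q) → Option (Fin n) → ℂ) : Prop :=
  (∀ x ∈ D, ∑ l : Fin p,
      Complex.normSq (∑ i, (starRingEnd ℂ) (α (Fin.castAdd q l) i) * fourierVec x i)
      = if f x then 1 else 0) ∧
  (∀ x ∈ D, ∑ l : Fin q,
      Complex.normSq (∑ i, (starRingEnd ℂ) (α (Fin.natAdd p l) i) * fourierVec x i)
      = if f x then 0 else 1) ∧
  (∀ x : Fin n → Bool, ∑ l : Fin (p + q),
      Complex.normSq (∑ i, (starRingEnd ℂ) (α l i) * fourierVec x i) = 1)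

/-- `rank(G_f(1,b))`: the dimension of the real span of the vectors `(1, x₁, …, xₙ)`
over all `x ∈ D` with `f x = b`. -/
def rankG {n : ℕ} (D : Set (Fin n → Bool)) (f : (Fin n → Bool) → Bool) (b : Bool) : ℕ :=
  Module.finrank ℝ (Submodule.span ℝ (polyVec '' {x ∈ D | f x = b}))

end

/-!
Write `φ = U₀ ψ` for the state fed to the oracle. Only its query weights
`β i = ∑ⱼ |φ(i, j)|²` matter, through `⟪O_x φ, O_y φ⟫ = β₀ + ∑ᵢ βᵢ (-1)^(xᵢ ⊕ yᵢ)`.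
If the algorithm is exact, then for `f x = 0` and `f y = 1` the unit vector `U₁ O_x φ` is
killed by `P` and `U₁ O_y φ` is fixed by it, so the two are orthogonal and this sum vanishes.
Conversely, take `m = 1`, `φ = (√βᵢ)ᵢ`, `U₀ = U₁ = 1`, and let `P` project onto the span of the
states `O_y φ` with `f y = 1`: every `O_x φ` with `f x = 0` is orthogonal to that span.
-/

open Matrix WithLp

theorem vecNormSq_eq_norm_sq {ι : Type*} [Fintype ι] (v : ι → ℂ) :
    vecNormSq v = ‖toLp 2 v‖ ^ 2 := by
  simp [vecNormSq, EuclideanSpace.norm_sq_eq, Complex.sq_norm]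

section EuclideanTransfer

variable {𝕜 ι : Type*} [RCLike 𝕜] [Fintype ι] [DecidableEq ι]

theorem toEuclideanCLM_mem_unitary {U : Matrix ι ι 𝕜} (hU : U ∈ unitaryGroup ι 𝕜) :
    toEuclideanCLM (𝕜 := 𝕜) U ∈ unitary (EuclideanSpace 𝕜 ι →L[𝕜] EuclideanSpace 𝕜 ι) :=
  Unitary.map_mem _ hU

theorem isStarProjection_toEuclideanCLM_iff {P : Matrix ι ι 𝕜} :
    IsStarProjection (toEuclideanCLM (𝕜 := 𝕜) P) ↔ P.IsHermitian ∧ P * P = P := by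
  refine ⟨fun h => ?_, fun ⟨hH, h2⟩ => IsStarProjection.map ⟨h2, hH.isSelfAdjoint⟩ _⟩
  have hP := h.map (toEuclideanCLM (𝕜 := 𝕜) (n := ι)).symm
  rw [StarAlgEquiv.symm_apply_apply] at hP
  exact ⟨hP.isSelfAdjoint.isHermitian, hP.isIdempotentElem.eq⟩

end EuclideanTransfer

theorem vecNormSq_mulVec {ι : Type*} [Fintype ι] [DecidableEq ι] (M : Matrix ι ι ℂ)
    (v : ι → ℂ) : vecNormSq (M *ᵥ v) = ‖toEuclideanCLM (𝕜 := ℂ) M (toLp 2 v)‖ ^ 2 := by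
  rw [vecNormSq_eq_norm_sq, toEuclideanCLM_toLp]

theorem vecNormSq_unitary_mulVec {ι : Type*} [Fintype ι] [DecidableEq ι] {U : Matrix ι ι ℂ}
    (hU : U ∈ unitaryGroup ι ℂ) (v : ι → ℂ) : vecNormSq (U *ᵥ v) = vecNormSq v := by
  rw [vecNormSq_mulVec,
    ContinuousLinearMap.norm_map_of_mem_unitary (toEuclideanCLM_mem_unitary hU),
    vecNormSq_eq_norm_sq]

theorem inner_eq_zero_of_isStarProjection {𝕜 E : Type*} [RCLike 𝕜] [NormedAddCommGroup E]
    [InnerProductSpace 𝕜 E] [CompleteSpace E] {p : E →L[𝕜] E} (hp : IsStarProjection p)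
    {a b : E} (ha : p a = 0) (hb : ‖p b‖ = ‖b‖) : inner 𝕜 a b = 0 := by
  obtain ⟨K, _, rfl⟩ := isStarProjection_iff_eq_starProjection.mp hp
  exact inner_eq_zero_symm.mp <| (Submodule.starProjection_apply_eq_zero_iff K).mp ha b
    ((K.mem_iff_norm_starProjection b).mpr hb)

section Oracle

variable {n m : ℕ}

theorem oracleMat_mulVec_none (x : Fin n → Bool) (φ : Option (Fin n) × Fin m → ℂ) (j : Fin m) :
    (oracleMat n m x *ᵥ φ) (none, j) = φ (none, j) := by
  simp [oracleMat, mulVec_diagonal]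

theorem oracleMat_mulVec_some (x : Fin n → Bool) (φ : Option (Fin n) × Fin m → ℂ) (i : Fin n)
    (j : Fin m) :
    (oracleMat n m x *ᵥ φ) (some i, j) = (if x i then -1 else 1) * φ (some i, j) := by
  simp [oracleMat, mulVec_diagonal]

theorem oracleMat_mem_unitaryGroup (x : Fin n → Bool) :
    oracleMat n m x ∈ unitaryGroup (Option (Fin n) × Fin m) ℂ := by
  rw [oracleMat, mem_unitaryGroup_iff, star_eq_conjTranspose, diagonal_conjTranspose,
    diagonal_mul_diagonal, ← diagonal_one]
  congr 1
  funext ⟨i, j⟩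
  rcases i with _ | i
  · simp
  · simp only [Pi.star_apply]
    split_ifs <;> simp

def queryWeight (φ : Option (Fin n) × Fin m → ℂ) (i : Option (Fin n)) : ℝ :=
  ∑ j, Complex.normSq (φ (i, j))

theorem sum_queryWeight (φ : Option (Fin n) × Fin m → ℂ) :
    ∑ i, queryWeight φ i = vecNormSq φ := by
  rw [vecNormSq, Fintype.sum_prod_type]
  rfl

def overlap (β : Option (Fin n) → ℝ) (x y : Fin n → Bool) : ℝ :=
  β none + ∑ i : Fin n, β (some i) * (if x i = y i then 1 else -1)

theorem inner_oracleMat_mulVec (x y : Fin n → Bool) (φ : Option (Fin n) × Fin m → ℂ) :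
    inner ℂ (toLp 2 (oracleMat n m x *ᵥ φ)) (toLp 2 (oracleMat n m y *ᵥ φ))
      = overlap (queryWeight φ) x y := by
  rw [EuclideanSpace.inner_toLp_toLp, dotProduct, Fintype.sum_prod_type, Fintype.sum_option]
  simp only [overlap, queryWeight, oracleMat_mulVec_none, oracleMat_mulVec_some, Pi.star_apply,
    star_mul', Complex.star_def, Complex.mul_conj, Complex.ofReal_add, Complex.ofReal_sum,
    Complex.ofReal_mul]
  congr 1
  refine Finset.sum_congr rfl fun i _ => ?_
  rw [Finset.sum_mul]
  refine Finset.sum_congr rfl fun j _ => ?_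
  cases x i <;> cases y i <;> simp [mul_comm, Complex.mul_conj]

end Oracle

variable {n : ℕ} {D : Set (Fin n → Bool)} {f : (Fin n → Bool) → Bool}

theorem exists_weights_of_computedExactly1 (h : ComputedExactly1 D f) :
    ∃ β : Option (Fin n) → ℝ, (∀ i, 0 ≤ β i) ∧ ∑ i, β i = 1 ∧
      ∀ x ∈ D, f x = false → ∀ y ∈ D, f y = true → overlap β x y = 0 := by
  obtain ⟨m, -, ψ, hψ, U₀, U₁, P, hU₀, hU₁, hPH, hP2, hval⟩ := h
  set φ := U₀ *ᵥ ψ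
  have hφ : vecNormSq φ = 1 := by rw [vecNormSq_unitary_mulVec hU₀, hψ]
  set a : (Fin n → Bool) → EuclideanSpace ℂ (Option (Fin n) × Fin m) :=
    fun z => toLp 2 (U₁ *ᵥ oracleMat n m z *ᵥ φ)
  have hPa : ∀ z ∈ D, ‖toEuclideanCLM (𝕜 := ℂ) P (a z)‖ ^ 2 = if f z then 1 else 0 := by
    intro z hz
    rw [← hval z hz, ← vecNormSq_mulVec]
    simp only [φ, mulVec_mulVec, Matrix.mul_assoc]
  have ha : ∀ z, ‖a z‖ ^ 2 = 1 := by
    intro z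
    rw [← vecNormSq_eq_norm_sq, vecNormSq_unitary_mulVec hU₁,
      vecNormSq_unitary_mulVec (oracleMat_mem_unitaryGroup z), hφ]
  refine ⟨queryWeight φ, fun i => Finset.sum_nonneg fun j _ => Complex.normSq_nonneg _,
    by rw [sum_queryWeight, hφ], fun x hx hfx y hy hfy => ?_⟩
  have hPx : toEuclideanCLM (𝕜 := ℂ) P (a x) = 0 := by simpa [hfx] using hPa x hx
  have hPy : ‖toEuclideanCLM (𝕜 := ℂ) P (a y)‖ = ‖a y‖ := by
    rw [← sq_eq_sq₀ (norm_nonneg _) (norm_nonneg _), ha, hPa y hy, hfy, if_pos rfl]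
  have hxy := inner_eq_zero_of_isStarProjection
    (isStarProjection_toEuclideanCLM_iff.mpr ⟨hPH, hP2⟩) hPx hPy
  simp only [a] at hxy
  rw [← toEuclideanCLM_toLp U₁, ← toEuclideanCLM_toLp U₁,
    ContinuousLinearMap.inner_map_map_of_mem_unitary (toEuclideanCLM_mem_unitary hU₁),
    inner_oracleMat_mulVec] at hxy
  exact_mod_cast hxy

theorem computedExactly1_of_weights {β : Option (Fin n) → ℝ} (hβ : ∀ i, 0 ≤ β i)
    (hsum : ∑ i, β i = 1)
    (horth : ∀ x ∈ D, f x = false → ∀ y ∈ D, f y = true → overlap β x y = 0) :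
    ComputedExactly1 D f := by
  set φ : Option (Fin n) × Fin 1 → ℂ := fun p => (√(β p.1) : ℂ)
  have hweight : queryWeight φ = β := by
    funext i
    simp [queryWeight, φ, Complex.normSq_ofReal, Real.mul_self_sqrt (hβ i)]
  have hφ : vecNormSq φ = 1 := by rw [← sum_queryWeight, hweight, hsum]
  set v : (Fin n → Bool) → EuclideanSpace ℂ (Option (Fin n) × Fin 1) :=
    fun z => toLp 2 (oracleMat n 1 z *ᵥ φ)
  set K := Submodule.span ℂ (v '' {y | y ∈ D ∧ f y = true})
  set P := (toEuclideanCLM (𝕜 := ℂ)).symm K.starProjection with hP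
  obtain ⟨hPH, hP2⟩ := (isStarProjection_toEuclideanCLM_iff (P := P)).mp <| by
    rw [hP, StarAlgEquiv.apply_symm_apply]
    exact isStarProjection_starProjection (U := K)
  refine ⟨1, le_rfl, φ, hφ, 1, 1, P, one_mem _, one_mem _, hPH, hP2, fun x hx => ?_⟩
  rw [mul_one, mul_one, ← mulVec_mulVec, vecNormSq_mulVec, hP, StarAlgEquiv.apply_symm_apply]
  cases hfx : f x with
  | false =>
    have hK_le : K ≤ (ℂ ∙ v x)ᗮ := by
      refine Submodule.span_le.mpr ?_
      rintro _ ⟨y, ⟨hy, hfy⟩, rfl⟩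
      rw [SetLike.mem_coe, Submodule.mem_orthogonal_singleton_iff_inner_right,
        inner_oracleMat_mulVec, hweight, horth x hx hfx y hy hfy, Complex.ofReal_zero]
    have hvx : v x ∈ Kᗮ := (K.mem_orthogonal' (v x)).2 fun u hu =>
      Submodule.mem_orthogonal_singleton_iff_inner_right.1 (hK_le hu)
    rw [(Submodule.starProjection_apply_eq_zero_iff K).mpr hvx]
    simp
  | true =>
    rw [K.starProjection_eq_self_iff.mpr (Submodule.subset_span ⟨x, ⟨hx, hfx⟩, rfl⟩),
      ← vecNormSq_eq_norm_sq, vecNormSq_unitary_mulVec (oracleMat_mem_unitaryGroup x), hφ]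
    simp

theorem stmt_0_general (n : ℕ) (D : Set (Fin n → Bool)) (f : (Fin n → Bool) → Bool) :
    ComputedExactly1 D f ↔
      ∃ β : Option (Fin n) → ℝ, (∀ i, 0 ≤ β i) ∧ (∑ i, β i) = 1 ∧
        ∀ x ∈ D, f x = false → ∀ y ∈ D, f y = true →
          β none + ∑ i : Fin n, β (some i) * (if x i = y i then 1 else -1) = 0 :=
  ⟨exists_weights_of_computedExactly1, fun ⟨_, hβ, hsum, horth⟩ =>
    computedExactly1_of_weights hβ hsum horth⟩

theorem stmt_0 (n : ℕ) (hn : 1 ≤ n) (D : Set (Fin n → Bool)) (f : (Fin n → Bool) → Bool)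
    (hnc : (∃ x ∈ D, f x = false) ∧ (∃ y ∈ D, f y = true)) :
    ComputedExactly1 D f ↔
      ∃ β : Option (Fin n) → ℝ, (∀ i, 0 ≤ β i) ∧ (∑ i, β i) = 1 ∧
        ∀ x ∈ D, f x = false → ∀ y ∈ D, f y = true →
          β none + ∑ i : Fin n, β (some i) * (if x i = y i then 1 else -1) = 0 :=
  stmt_0_general n D f
end

section
/- Let n ≥ 1 and let f : D → {0,1} be an n-bit partial Boolean function such that for every k ∈ {1,…,n} there exist X, X' ∈ D that differ exactly in the k-th coordinate and satisfy f(X) ≠ f(X'). If there exists a vector β = (β_0, β_1, …, β_n) ∈ ℝ^{n+1} with β_i ≥ 0 for all i, β_0 + β_1 + ⋯ + β_n = 1, and β_0 + Σ_{i=1}^{n} β_i·(−1)^{x_i ⊕ y_i} = 0 for every x ∈ D with f(x) = 0 and every y ∈ D with f(y) = 1, then n ≤ 2. -/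
/-!
A pair `x, y` of opposite values that differ only in bit `k` turns the constraint into
`β₀ + ∑ᵢ βᵢ - 2 βₖ = 0`, i.e. `βₖ = 1/2` since the weights sum to `1`. Every bit is sensitive,
so `∑_{i ≥ 1} βᵢ = n/2`, and `β₀ ≥ 0` forces `n/2 ≤ 1`.
-/

open scoped BigOperators

open Finset

lemma update_not_apply_eq_iff {ι : Type*} [DecidableEq ι] (x : ι → Bool) (k i : ι) :
    x i = Function.update x k (!(x k)) i ↔ i ≠ k := by
  by_cases hik : i = k
  · subst hik; simp
  · simp [hik]

lemma sum_mul_sign_of_eq_iff_ne {ι : Type*} [Fintype ι] [DecidableEq ι] (w : ι → ℝ)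
    (x y : ι → Bool) (k : ι) (hxy : ∀ i, x i = y i ↔ i ≠ k) :
    ∑ i, w i * (if x i = y i then 1 else -1) = ∑ i, w i - 2 * w k := by
  have hterm : ∀ i, w i * (if x i = y i then 1 else -1) = w i - if i = k then 2 * w k else 0 := by
    intro i
    by_cases hik : i = k
    · subst hik; simp only [(hxy i).not_left.mpr, ↓reduceIte, mul_neg, mul_one]; ring
    · simp [(hxy i).mpr hik, hik]
  simp only [hterm, sum_sub_distrib, sum_ite_eq', mem_univ, if_true]

lemma weight_eq_half_of_eq_iff_ne {ι : Type*} [Fintype ι] [DecidableEq ι]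
    (β : Option ι → ℝ) (hβsum : ∑ i, β i = 1) (x y : ι → Bool) (k : ι)
    (hxy : ∀ i, x i = y i ↔ i ≠ k)
    (hβxy : β none + ∑ i : ι, β (some i) * (if x i = y i then 1 else -1) = 0) :
    β (some k) = 1 / 2 := by
  rw [Fintype.sum_option] at hβsum
  rw [sum_mul_sign_of_eq_iff_ne _ x y k hxy] at hβxy
  linarith

theorem stmt_3_general (n : ℕ) (D : Set (Fin n → Bool)) (f : (Fin n → Bool) → Bool)
    (hdep : ∀ k : Fin n, ∃ X ∈ D, Function.update X k (!(X k)) ∈ D ∧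
      f X ≠ f (Function.update X k (!(X k))))
    (hβ : ∃ β : Option (Fin n) → ℝ, (∀ i, 0 ≤ β i) ∧ (∑ i, β i) = 1 ∧
      ∀ x ∈ D, f x = false → ∀ y ∈ D, f y = true →
        β none + ∑ i : Fin n, β (some i) * (if x i = y i then 1 else -1) = 0) :
    n ≤ 2 := by
  obtain ⟨β, hβ0, hβsum, hβeq⟩ := hβ
  have hhalf : ∀ k, β (some k) = 1 / 2 := by
    intro k
    obtain ⟨X, hX, hX', hne⟩ := hdep k
    have hdiff := update_not_apply_eq_iff X k
    cases hfX : f X <;> cases hfX' : f (Function.update X k (!(X k))) <;>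
      simp only [hfX, hfX', ne_eq, not_true_eq_false] at hne
    · exact weight_eq_half_of_eq_iff_ne β hβsum _ _ k hdiff (hβeq X hX hfX _ hX' hfX')
    · exact weight_eq_half_of_eq_iff_ne β hβsum _ _ k (fun i => eq_comm.trans (hdiff i))
        (hβeq _ hX' hfX' X hX hfX)
  have htotal : β none + n / 2 = 1 := by
    simpa [Fintype.sum_option, hhalf, div_eq_mul_inv] using hβsum
  have hn : (n : ℝ) ≤ 2 := by linarith [hβ0 none]
  exact_mod_cast hn

theorem stmt_3 (n : ℕ) (hn : 1 ≤ n) (D : Set (Fin n → Bool)) (f : (Fin n → Bool) → Bool)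
    (hdep : ∀ k : Fin n, ∃ X ∈ D, Function.update X k (!(X k)) ∈ D ∧
      f X ≠ f (Function.update X k (!(X k))))
    (hβ : ∃ β : Option (Fin n) → ℝ, (∀ i, 0 ≤ β i) ∧ (∑ i, β i) = 1 ∧
      ∀ x ∈ D, f x = false → ∀ y ∈ D, f y = true →
        β none + ∑ i : Fin n, β (some i) * (if x i = y i then 1 else -1) = 0) :
    n ≤ 2 :=
  stmt_3_general n D f hdep hβ
end

section
/- Let f : D → {0,1} be a 2-bit partial Boolean function (D ⊆ {0,1}²) such that for each k ∈ {1,2} there exist X, X' ∈ D that differ exactly in the k-th coordinate and satisfy f(X) ≠ f(X'). If there exists a vector β = (β_0, β_1, β_2) with β_i ≥ 0, β_0 + β_1 + β_2 = 1, and β_0 + β_1·(−1)^{x_1 ⊕ y_1} + β_2·(−1)^{x_2 ⊕ y_2} = 0 for every x ∈ D with f(x) = 0 and every y ∈ D with f(y) = 1, then either f(x) = x_1 ⊕ x_2 for all x ∈ D, or f(x) = 1 ⊕ x_1 ⊕ x_2 for all x ∈ D. -/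
open scoped BigOperators

/-!
A pair in `D` that differs only in coordinate `k` and on which `f` differs forces
`1 - 2 βₖ = 0`; as `f` has such a pair in both directions, `β = (0, 1/2, 1/2)`. The constraint
then says that any `x, y ∈ D` with `f x ≠ f y` agree in exactly one coordinate, i.e. have
different parity, and a non-constant `f` with this property is the parity or its negation.
-/

/-- `β₀ + ∑ᵢ βᵢ (-1)^(xᵢ ⊕ yᵢ)`. -/
def signCorr {n : ℕ} (β : Option (Fin n) → ℝ) (x y : Fin n → Bool) : ℝ :=
  β none + ∑ i, β (some i) * (if x i = y i then 1 else -1)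

lemma signCorr_comm {n : ℕ} (β : Option (Fin n) → ℝ) (x y : Fin n → Bool) :
    signCorr β x y = signCorr β y x := by
  simp only [signCorr, eq_comm]

lemma signCorr_update_not {n : ℕ} (β : Option (Fin n) → ℝ) (x : Fin n → Bool) (k : Fin n) :
    signCorr β x (Function.update x k (!x k)) = ∑ o, β o - 2 * β (some k) := by
  have hflip : ∀ i, (if x i = Function.update x k (!x k) i then (1 : ℝ) else -1)
      = 1 - 2 * if i = k then 1 else 0 := by
    intro i
    rcases eq_or_ne i k with rfl | hik
    · norm_num
    · simp [hik]
  simp only [signCorr, hflip, mul_sub, mul_one, mul_ite, mul_zero, Finset.sum_sub_distrib,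
    Finset.sum_ite_eq', Finset.mem_univ, if_true, Fintype.sum_option]
  ring

lemma xor_ne_xor_of_signCorr_eq_zero {β : Option (Fin 2) → ℝ}
    (hnone : β none = 0) (hsome : ∀ i, β (some i) = 1 / 2) {x y : Fin 2 → Bool}
    (h : signCorr β x y = 0) : xor (x 0) (x 1) ≠ xor (y 0) (y 1) := by
  simp only [signCorr, hnone, hsome, Fin.sum_univ_two] at h
  revert h
  cases x 0 <;> cases x 1 <;> cases y 0 <;> cases y 1 <;> norm_num

lemma Bool.eq_or_eq_not_of_ne_imp_ne {α : Type*} {D : Set α} {f g : α → Bool}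
    (hfg : ∀ x ∈ D, ∀ y ∈ D, f x ≠ f y → g x ≠ g y) {a b : α} (ha : a ∈ D) (hb : b ∈ D)
    (hab : f a ≠ f b) : (∀ x ∈ D, f x = g x) ∨ (∀ x ∈ D, f x = !g x) := by
  have hconst : ∀ x ∈ D, xor (f x) (g x) = xor (f a) (g a) := by
    intro x hx
    have hxa := hfg x hx a ha
    have hxb := hfg x hx b hb
    have hab' := hfg a ha b hb hab
    revert hxa hxb hab' hab
    cases f x <;> cases f a <;> cases f b <;> cases g x <;> cases g a <;> cases g b <;> simp
  cases hc : xor (f a) (g a)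
  · exact Or.inl fun x hx => by simpa [hc] using hconst x hx
  · exact Or.inr fun x hx => by simpa [hc, Bool.eq_not_iff] using hconst x hx

theorem stmt_4 (D : Set (Fin 2 → Bool)) (f : (Fin 2 → Bool) → Bool)
    (hdep : ∀ k : Fin 2, ∃ X ∈ D, Function.update X k (!(X k)) ∈ D ∧
      f X ≠ f (Function.update X k (!(X k))))
    (hβ : ∃ β : Option (Fin 2) → ℝ, (∀ i, 0 ≤ β i) ∧ (∑ i, β i) = 1 ∧
      ∀ x ∈ D, f x = false → ∀ y ∈ D, f y = true →
        β none + ∑ i : Fin 2, β (some i) * (if x i = y i then 1 else -1) = 0) :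
    (∀ x ∈ D, f x = xor (x 0) (x 1)) ∨ (∀ x ∈ D, f x = !(xor (x 0) (x 1))) := by
  obtain ⟨β, -, hsum, hsep⟩ := hβ
  have hcorr : ∀ x ∈ D, ∀ y ∈ D, f x ≠ f y → signCorr β x y = 0 := by
    intro x hx y hy hxy
    cases hfx : f x <;> cases hfy : f y <;> simp only [hfx, hfy, ne_eq, not_true] at hxy
    · exact hsep x hx hfx y hy hfy
    · rw [signCorr_comm]
      exact hsep y hy hfy x hx hfx
  have hsome : ∀ k, β (some k) = 1 / 2 := by
    intro k
    obtain ⟨X, hX, hY, hne⟩ := hdep k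
    have h := hcorr X hX _ hY hne
    rw [signCorr_update_not, hsum] at h
    linarith
  have hnone : β none = 0 := by
    simp only [Fintype.sum_option, Fin.sum_univ_two, hsome] at hsum
    linarith
  obtain ⟨X, hX, hY, hne⟩ := hdep 0
  exact Bool.eq_or_eq_not_of_ne_imp_ne
    (fun x hx y hy hxy => xor_ne_xor_of_signCorr_eq_zero hnone hsome (hcorr x hx y hy hxy))
    hX hY hne
end

section
/- For every n ≥ 1, the number of n-bit partial Boolean functions that depend on n bits is at least 2·3^{2^n − n − 1}. Here n-bit partial Boolean functions are identified with maps F : {0,1}^n → {0,1,*}, the domain D of the partial Boolean function being the set of inputs not mapped to *. -/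
open scoped BigOperators

/-!
Fix `z : {0,1}ⁿ` and a bit `b`. A partial function with `F z = b` and `F (z ⊕ eᵢ) = ¬b` for
every `i` forces every representing polynomial to contain each variable `xᵢ`: a polynomial not
containing `xᵢ` takes the same value at `z` and `z ⊕ eᵢ`. Multilinear interpolation on the cube
provides a representing polynomial, so such an `F` depends on `n` bits. The values of `F` on the
`2ⁿ - n - 1` points outside `z` and its neighbours are arbitrary in `{0, 1, *}`.
-/

open MvPolynomial Function

section Interpolation

variable {σ : Type*} [Fintype σ]

def boolVec (x : σ → Bool) : σ → ℝ := fun i => if x i then 1 else 0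

noncomputable def boolIndicatorPoly (y : σ → Bool) : MvPolynomial σ ℝ :=
  ∏ i, if y i then X i else 1 - X i

theorem eval_boolIndicatorPoly (y x : σ → Bool) :
    eval (boolVec x) (boolIndicatorPoly y) = if y = x then 1 else 0 := by
  have hfactor : ∀ i, eval (boolVec x) (if y i then X i else 1 - X i) =
      if y i = x i then (1 : ℝ) else 0 := by
    intro i
    cases hy : y i <;> cases hx : x i <;> simp [boolVec, hx]
  simp only [boolIndicatorPoly, map_prod, hfactor, Finset.prod_boole, Finset.mem_univ,
    true_implies, _root_.funext_iff]

variable [DecidableEq σ]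

theorem degreeOf_boolIndicatorPoly_le (y : σ → Bool) (j : σ) :
    (boolIndicatorPoly y).degreeOf j ≤ 1 := by
  have hfactor : ∀ i, (if y i then X i else 1 - X i : MvPolynomial σ ℝ).degreeOf j ≤
      if j = i then 1 else 0 := by
    intro i
    split
    · exact (degreeOf_X j i).le
    · refine (degreeOf_sub_le _ _ _).trans ?_
      rw [degreeOf_one, degreeOf_X]
      simp
  calc (boolIndicatorPoly y).degreeOf j
      ≤ ∑ i, (if y i then X i else 1 - X i : MvPolynomial σ ℝ).degreeOf j :=
        degreeOf_prod_le _ _ _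
    _ ≤ ∑ i, if j = i then 1 else 0 := Finset.sum_le_sum fun i _ => hfactor i
    _ = 1 := by simp

noncomputable def boolInterp (g : (σ → Bool) → ℝ) : MvPolynomial σ ℝ :=
  ∑ y, C (g y) * boolIndicatorPoly y

theorem degreeOf_boolInterp_le (g : (σ → Bool) → ℝ) (j : σ) :
    (boolInterp g).degreeOf j ≤ 1 := by
  refine (degreeOf_sum_le _ _ _).trans (Finset.sup_le fun y _ => ?_)
  exact (degreeOf_C_mul_le _ _ _).trans (degreeOf_boolIndicatorPoly_le y j)

theorem eval_boolInterp (g : (σ → Bool) → ℝ) (x : σ → Bool) :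
    eval (boolVec x) (boolInterp g) = g x := by
  simp [boolInterp, eval_boolIndicatorPoly]

end Interpolation

section DependsOnBits

variable {n : ℕ}

theorem exists_isMultilinear_represents (D : Set (Fin n → Bool)) (f : (Fin n → Bool) → Bool) :
    ∃ p, IsMultilinear p ∧ Represents p D f :=
  ⟨boolInterp fun x => if f x then 1 else 0, degreeOf_boolInterp_le _,
    fun x _ => eval_boolInterp _ x⟩

def flipBit (z : Fin n → Bool) (i : Fin n) : Fin n → Bool := update z i (!z i)

theorem flipBit_injective (z : Fin n → Bool) : Injective (flipBit z) := by
  intro i j hij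
  by_contra hne
  have := congrFun hij i
  simp [flipBit, hne] at this

theorem flipBit_ne (z : Fin n → Bool) (i : Fin n) : flipBit z i ≠ z := by
  intro h
  simpa [flipBit] using congrFun h i

theorem mem_vars_of_represents {D : Set (Fin n → Bool)} {f : (Fin n → Bool) → Bool}
    {p : MvPolynomial (Fin n) ℝ} (hp : Represents p D f) {z : Fin n → Bool} {i : Fin n}
    (hz : z ∈ D) (hflip : flipBit z i ∈ D) (hf : f (flipBit z i) ≠ f z) : i ∈ p.vars := by
  by_contra hi
  have heval : eval (boolVec z) p = eval (boolVec (flipBit z i)) p :=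
    eval₂Hom_congr' rfl (fun j hj _ => by
      simp [boolVec, flipBit, update_of_ne (ne_of_mem_of_not_mem hj hi)]) rfl
  have hz' := hp z hz
  have hflip' := hp _ hflip
  change eval (boolVec z) p = _ at hz'
  change eval (boolVec (flipBit z i)) p = _ at hflip'
  rw [heval, hflip'] at hz'
  revert hf hz'
  cases f z <;> cases f (flipBit z i) <;> simp

theorem dependsOnBits_of_sensitive {D : Set (Fin n → Bool)} {f : (Fin n → Bool) → Bool}
    {z : Fin n → Bool} (hz : z ∈ D) (hflip : ∀ i, flipBit z i ∈ D)
    (hf : ∀ i, f (flipBit z i) ≠ f z) : DependsOnBits D f n := by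
  have hvars : ∀ p, Represents p D f → p.vars = Finset.univ := fun p hp =>
    Finset.eq_univ_of_forall fun i => mem_vars_of_represents hp hz (hflip i) (hf i)
  obtain ⟨p, hmult, hp⟩ := exists_isMultilinear_represents D f
  refine ⟨⟨p, hmult, hp, by simp [hvars p hp]⟩, ?_⟩
  rintro c ⟨q, -, hq, rfl⟩
  simp [hvars q hq]

def flipNbhd (z : Fin n → Bool) : Finset (Fin n → Bool) :=
  insert z (Finset.univ.image (flipBit z))

theorem card_flipNbhd (z : Fin n → Bool) : (flipNbhd z).card = n + 1 := by
  rw [flipNbhd, Finset.card_insert_of_notMem (by simp [flipBit_ne]),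
    Finset.card_image_of_injective _ (flipBit_injective z), Finset.card_univ, Fintype.card_fin]

theorem card_compl_flipNbhd (z : Fin n → Bool) :
    Fintype.card {x // x ∉ flipNbhd z} = 2 ^ n - n - 1 := by
  rw [Fintype.card_subtype_compl, Fintype.card_coe, card_flipNbhd, Fintype.card_fun,
    Fintype.card_bool, Fintype.card_fin, Nat.sub_sub]

def sensitiveExtension (z : Fin n → Bool) (b : Bool) (g : {x // x ∉ flipNbhd z} → Option Bool)
    (x : Fin n → Bool) : Option Bool :=
  if x = z then some b else if h : x ∈ flipNbhd z then some !b else g ⟨x, h⟩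

theorem sensitiveExtension_injective (z : Fin n → Bool) :
    Injective (uncurry (sensitiveExtension z)) := by
  rintro ⟨b, g⟩ ⟨b', g'⟩ h
  have hb : b = b' := by simpa [sensitiveExtension] using congrFun h z
  have hg : g = g' := funext fun ⟨x, hx⟩ => by
    have hxz : x ≠ z := fun h => hx (h ▸ Finset.mem_insert_self _ _)
    simpa [sensitiveExtension, hxz, hx] using congrFun h x
  rw [hb, hg]

theorem dependsOnBits_sensitiveExtension (z : Fin n → Bool) (b : Bool)
    (g : {x // x ∉ flipNbhd z} → Option Bool) :
    DependsOnBits {x | sensitiveExtension z b g x ≠ none}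
      (fun x => (sensitiveExtension z b g x).getD false) n := by
  have hflip : ∀ i, sensitiveExtension z b g (flipBit z i) = some !b := fun i => by
    simp [sensitiveExtension, flipBit_ne, flipNbhd]
  refine dependsOnBits_of_sensitive (z := z) ?_ (fun i => ?_) (fun i => ?_)
  · simp [sensitiveExtension]
  · simp [hflip]
  · rw [hflip]
    simp [sensitiveExtension]

end DependsOnBits

theorem stmt_5_general (n : ℕ) :
    2 * 3 ^ (2 ^ n - n - 1) ≤
      Set.ncard {F : (Fin n → Bool) → Option Bool |
        DependsOnBits {x | F x ≠ none} (fun x => (F x).getD false) n} := by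
  let z : Fin n → Bool := fun _ => false
  calc 2 * 3 ^ (2 ^ n - n - 1) = Nat.card (Bool × ({x // x ∉ flipNbhd z} → Option Bool)) := by
        rw [Nat.card_eq_fintype_card, Fintype.card_prod, Fintype.card_fun, card_compl_flipNbhd,
          Fintype.card_bool, Fintype.card_option, Fintype.card_bool]
    _ = (Set.range (uncurry (sensitiveExtension z))).ncard :=
        (Set.ncard_range_of_injective (sensitiveExtension_injective z)).symm
    _ ≤ _ := Set.ncard_le_ncard (Set.range_subset_iff.2 fun ⟨b, g⟩ =>
        dependsOnBits_sensitiveExtension z b g) (Set.toFinite _)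

/-- Partial Boolean functions are identified with maps
`F : {0,1}^n → {0,1,*}` (with `*` encoded as `none`). -/
theorem stmt_5 (n : ℕ) (hn : 1 ≤ n) :
    2 * 3 ^ (2 ^ n - n - 1) ≤
      Set.ncard {F : (Fin n → Bool) → Option Bool |
        DependsOnBits {x | F x ≠ none} (fun x => (F x).getD false) n} :=
  stmt_5_general n
end

section
/- Let f : D → {0,1} be an n-bit partial Boolean function that depends on k bits, and suppose there exist vectors α¹, …, α^p ∈ ℂ^{n+1} such that f(x) = Σ_{l=1}^{p} |⟨α^l, F(x)₁⟩|² for all x ∈ D. Then there are at least k indices i ∈ {1,…,n} for which the column vector (α¹_i, …, α^p_i) ∈ ℂ^{p} is nonzero. -/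
open scoped BigOperators

/-!
Write `χ₀ = 1` and `χᵢ = 1 - 2xᵢ` (`fourierPoly`), so that `|F(x)⟩₁ = (χ₀(x), …, χₙ(x))`
on Boolean points.
Expanding `|⟨a, F(x)⟩|² = ∑_{i,j} Re(conj aᵢ · aⱼ) χᵢ(x) χⱼ(x)` and replacing each diagonal product
`χᵢ²` by `1` (which does not change its values on `{0,1}ⁿ`) gives, summed over the rows `α¹, …, αᵖ`,
a multilinear polynomial representing `f`. Its variables are among the `i` whose column
`(α¹ᵢ, …, αᵖᵢ)` is nonzero, and by definition of `k` it has at least `k` of them.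
-/

open MvPolynomial

noncomputable section

variable {σ : Type*}

def fourierPoly : Option σ → MvPolynomial σ ℝ
  | none => 1
  | some i => 1 - C 2 * X i

theorem degreeOf_fourierPoly_le [DecidableEq σ] (v : σ) (o : Option σ) :
    (fourierPoly o).degreeOf v ≤ if o = some v then 1 else 0 := by
  cases o with
  | none => simp [fourierPoly]
  | some i =>
    calc (fourierPoly (some i)).degreeOf v
        ≤ (X i : MvPolynomial σ ℝ).degreeOf v :=
          (degreeOf_sub_le _ _ _).trans (max_le (by simp) (degreeOf_C_mul_le _ _ _))
      _ = _ := by rw [degreeOf_X]; simp [eq_comm]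

theorem fourierPoly_mem_supported {s : Set σ} {o : Option σ} (h : ∀ v ∈ o, v ∈ s) :
    fourierPoly o ∈ supported ℝ s := by
  cases o with
  | none => exact Subalgebra.one_mem _
  | some i =>
    exact Subalgebra.sub_mem _ (Subalgebra.one_mem _) <|
      Subalgebra.mul_mem _ (Subalgebra.algebraMap_mem _ _) (X_mem_supported.mpr (h i rfl))

theorem eval_fourierPoly_mul_self (x : σ → Bool) (o : Option σ) :
    eval (fun i => if x i then (1 : ℝ) else 0) (fourierPoly o) *
      eval (fun i => if x i then (1 : ℝ) else 0) (fourierPoly o) = 1 := by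
  cases o with
  | none => simp [fourierPoly]
  | some i => cases h : x i <;> norm_num [fourierPoly, h]

theorem fourierVec_eq_eval_fourierPoly {n : ℕ} (x : Fin n → Bool) (o : Option (Fin n)) :
    fourierVec x o = (eval (fun i => if x i then (1 : ℝ) else 0) (fourierPoly o) : ℂ) := by
  cases o with
  | none => simp [fourierVec, fourierPoly]
  | some i => cases h : x i <;> norm_num [fourierVec, fourierPoly, h]

def fourierProdPoly [DecidableEq σ] (i j : Option σ) : MvPolynomial σ ℝ :=
  if i = j then 1 else fourierPoly i * fourierPoly j

section fourierProdPoly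

variable [DecidableEq σ]

theorem degreeOf_fourierProdPoly_le (v : σ) (i j : Option σ) :
    (fourierProdPoly i j).degreeOf v ≤ 1 := by
  unfold fourierProdPoly
  split_ifs with hij
  · simp
  · have hi := degreeOf_fourierPoly_le v i
    have hj := degreeOf_fourierPoly_le v j
    refine (degreeOf_mul_le _ _ _).trans ?_
    split_ifs at hi hj <;> first | omega | exact absurd (‹i = _›.trans ‹j = _›.symm) hij

theorem fourierProdPoly_mem_supported {s : Set σ} {i j : Option σ}
    (hi : ∀ v ∈ i, v ∈ s) (hj : ∀ v ∈ j, v ∈ s) : fourierProdPoly i j ∈ supported ℝ s := by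
  unfold fourierProdPoly
  split_ifs
  · exact Subalgebra.one_mem _
  · exact Subalgebra.mul_mem _ (fourierPoly_mem_supported hi) (fourierPoly_mem_supported hj)

theorem eval_fourierProdPoly (x : σ → Bool) (i j : Option σ) :
    eval (fun v => if x v then (1 : ℝ) else 0) (fourierProdPoly i j) =
      eval (fun v => if x v then (1 : ℝ) else 0) (fourierPoly i) *
        eval (fun v => if x v then (1 : ℝ) else 0) (fourierPoly j) := by
  unfold fourierProdPoly
  split_ifs with hij
  · rw [hij, eval_fourierPoly_mul_self, map_one]
  · rw [map_mul]

end fourierProdPoly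

theorem Complex.normSq_sum_conj_mul_ofReal {ι : Type*} [Fintype ι] (a : ι → ℂ) (s : ι → ℝ) :
    Complex.normSq (∑ i, starRingEnd ℂ (a i) * s i) =
      ∑ i, ∑ j, (starRingEnd ℂ (a i) * a j).re * (s i * s j) := by
  rw [← Complex.ofReal_re (Complex.normSq _), ← Complex.mul_conj, map_sum,
    Finset.sum_mul_sum, Complex.re_sum]
  refine Finset.sum_congr rfl fun i _ => ?_
  rw [Complex.re_sum]
  refine Finset.sum_congr rfl fun j _ => ?_
  rw [← Complex.re_mul_ofReal]
  simp only [map_mul, Complex.conj_conj, Complex.conj_ofReal, Complex.ofReal_mul]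
  ring_nf

variable [Fintype σ] [DecidableEq σ] {p : ℕ}

def sosPoly (α : Fin p → Option σ → ℂ) : MvPolynomial σ ℝ :=
  ∑ l, ∑ i, ∑ j, C (starRingEnd ℂ (α l i) * α l j).re * fourierProdPoly i j

theorem degreeOf_sosPoly_le (α : Fin p → Option σ → ℂ) (v : σ) :
    (sosPoly α).degreeOf v ≤ 1 := by
  refine (degreeOf_sum_le _ _ _).trans (Finset.sup_le fun l _ => ?_)
  refine (degreeOf_sum_le _ _ _).trans (Finset.sup_le fun i _ => ?_)
  refine (degreeOf_sum_le _ _ _).trans (Finset.sup_le fun j _ => ?_)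
  exact (degreeOf_C_mul_le _ _ _).trans (degreeOf_fourierProdPoly_le v i j)

theorem sosPoly_mem_supported (α : Fin p → Option σ → ℂ) :
    sosPoly α ∈ supported ℝ {v | ∃ l, α l (some v) ≠ 0} := by
  refine Subalgebra.sum_mem _ fun l _ => Subalgebra.sum_mem _ fun i _ =>
    Subalgebra.sum_mem _ fun j _ => ?_
  by_cases hc : (starRingEnd ℂ (α l i) * α l j).re = 0
  · rw [hc, map_zero, zero_mul]
    exact Subalgebra.zero_mem _
  have hi : α l i ≠ 0 := fun h => hc (by simp [h])
  have hj : α l j ≠ 0 := fun h => hc (by simp [h])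
  exact Subalgebra.mul_mem _ (Subalgebra.algebraMap_mem _ _) <| fourierProdPoly_mem_supported
    (fun v hv => ⟨l, Option.mem_def.mp hv ▸ hi⟩) (fun v hv => ⟨l, Option.mem_def.mp hv ▸ hj⟩)

theorem eval_sosPoly {n : ℕ} (α : Fin p → Option (Fin n) → ℂ) (x : Fin n → Bool) :
    eval (fun i => if x i then (1 : ℝ) else 0) (sosPoly α) =
      ∑ l, Complex.normSq (∑ i, starRingEnd ℂ (α l i) * fourierVec x i) := by
  simp only [sosPoly, map_sum, map_mul, eval_C, eval_fourierProdPoly,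
    fourierVec_eq_eval_fourierPoly, Complex.normSq_sum_conj_mul_ofReal]

end

theorem stmt_9 (n k p : ℕ) (D : Set (Fin n → Bool)) (f : (Fin n → Bool) → Bool)
    (hdep : DependsOnBits D f k)
    (α : Fin p → Option (Fin n) → ℂ)
    (hα : ∀ x ∈ D, ∑ l : Fin p,
      Complex.normSq (∑ i, (starRingEnd ℂ) (α l i) * fourierVec x i)
      = if f x then 1 else 0) :
    k ≤ Set.ncard {i : Fin n | ∃ l : Fin p, α l (some i) ≠ 0} := by
  calc k ≤ (sosPoly α).vars.card :=
        hdep.2 ⟨sosPoly α, degreeOf_sosPoly_le α,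
          fun x hx => (eval_sosPoly α x).trans (hα x hx), rfl⟩
    _ = (↑(sosPoly α).vars : Set (Fin n)).ncard := (Set.ncard_coe_finset _).symm
    _ ≤ _ := Set.ncard_le_ncard (mem_supported.mp (sosPoly_mem_supported α)) (Set.toFinite _)
end

section
/- For n ≥ 2 and 1 ≤ j ≤ n+1, let X_1, …, X_j ∈ {0,1}^n be distinct points such that the vectors (1, X_1), …, (1, X_j) ∈ ℝ^{n+1} are linearly independent. Then the number of points Y ∈ {0,1}^n \ {X_1, …, X_j} such that (1, Y) lies in the real linear span of (1, X_1), …, (1, X_j) is at most 2^{j−1} − j. -/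
open scoped BigOperators

/-!
Every vector `(1, Y)` has first coordinate `1`, so all such vectors lying in a subspace `V`
differ by elements of `V ∩ {v | v₀ = 0}`, a proper subspace of `V` once one of them lies in
`V`. A set of `0/1`-vectors whose differences lie in a subspace `W` has at most
`2 ^ dim W` elements: two distinct such vectors differ in some coordinate `i`, splitting the set
along the value of that coordinate gives two halves whose differences lie in `W ∩ {v | vᵢ = 0}`,
which has smaller dimension. Hence at most `2 ^ (j - 1)` points `Y` have `(1, Y)` in the span,
and `j` of them are the `X r`.
-/

open Module

theorem Finset.card_le_two_pow_finrank_of_sub_mem {K ι : Type*} [Field K] [Finite ι]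
    {V : Submodule K (ι → K)} {s : Finset (ι → K)}
    (hs01 : ∀ x ∈ s, ∀ i, x i = 0 ∨ x i = 1) (hsV : ∀ x ∈ s, ∀ y ∈ s, x - y ∈ V) :
    s.card ≤ 2 ^ finrank K V := by
  classical
  induction hd : finrank K V using Nat.strong_induction_on generalizing V s with
  | _ d ih =>
  rcases le_or_gt s.card 1 with hle | hlt
  · exact hle.trans Nat.one_le_two_pow
  obtain ⟨x, hx, y, hy, hxy⟩ := Finset.one_lt_card.mp hlt
  obtain ⟨i, hi⟩ := Function.ne_iff.mp hxy
  set V' := V ⊓ LinearMap.ker (LinearMap.proj i : (ι → K) →ₗ[K] K)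
  have hV' : finrank K V' < d := by
    refine hd ▸ Submodule.finrank_lt_finrank_of_lt (lt_of_le_of_ne inf_le_left fun h => hi ?_)
    have hmem : x - y ∈ V' := h ▸ hsV x hx y hy
    simpa [V', sub_eq_zero] using hmem.2
  have hhalf : ∀ c : K, (s.filter (· i = c)).card ≤ 2 ^ (d - 1) := by
    intro c
    have hsub : ∀ z ∈ s.filter (· i = c), ∀ w ∈ s.filter (· i = c), z - w ∈ V' := by
      simp only [Finset.mem_filter]
      exact fun z hz w hw => ⟨hsV z hz.1 w hw.1, by simp [hz.2, hw.2]⟩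
    exact (ih _ hV' (fun z hz => hs01 z (Finset.mem_of_mem_filter z hz)) hsub rfl).trans
      (Nat.pow_le_pow_right two_pos (by omega))
  have hcompl : s.filter (¬ · i = 0) ⊆ s.filter (· i = 1) := fun z hz => by
    simp only [Finset.mem_filter] at hz ⊢
    exact ⟨hz.1, (hs01 z hz.1 i).resolve_left hz.2⟩
  calc s.card = (s.filter (· i = 0)).card + (s.filter (¬ · i = 0)).card :=
        (Finset.card_filter_add_card_filter_not _).symm
    _ ≤ 2 ^ (d - 1) + 2 ^ (d - 1) :=
        Nat.add_le_add (hhalf 0) ((Finset.card_le_card hcompl).trans (hhalf 1))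
    _ = 2 ^ d := by rw [← two_mul, ← pow_succ', Nat.sub_add_cancel (by omega)]

theorem polyVec_injective {n : ℕ} : Function.Injective (polyVec (n := n)) := fun x y h =>
  funext fun i => by
    have hi := congrFun h (some i)
    cases hx : x i <;> cases hy : y i <;> simp_all [polyVec]

theorem polyVec_eq_zero_or_one {n : ℕ} (x : Fin n → Bool) (o : Option (Fin n)) :
    polyVec x o = 0 ∨ polyVec x o = 1 := by
  cases o <;> simp [polyVec]

theorem ncard_setOf_polyVec_mem_le {n : ℕ} (V : Submodule ℝ (Option (Fin n) → ℝ)) :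
    {Y | polyVec Y ∈ V}.ncard ≤ 2 ^ (finrank ℝ V - 1) := by
  classical
  rcases Set.eq_empty_or_nonempty {Y | polyVec Y ∈ V} with hS | ⟨Y₀, hY₀⟩
  · simp [hS]
  set V' := V ⊓ LinearMap.ker (LinearMap.proj none : (Option (Fin n) → ℝ) →ₗ[ℝ] ℝ)
  have hV' : finrank ℝ V' ≤ finrank ℝ V - 1 := by
    have hlt : V' < V := lt_of_le_of_ne inf_le_left fun h => by
      have hmem : polyVec Y₀ ∈ V' := h ▸ hY₀
      simpa [V', polyVec] using hmem.2
    have := Submodule.finrank_lt_finrank_of_lt hlt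
    omega
  have hcube := Finset.card_le_two_pow_finrank_of_sub_mem (V := V')
    (s := (Finset.univ.filter (polyVec · ∈ V)).image polyVec)
    (by simp [polyVec_eq_zero_or_one])
    (by
      simp only [Finset.forall_mem_image, Finset.mem_filter, Finset.mem_univ, true_and]
      exact fun x hx y hy => ⟨V.sub_mem hx hy, by simp [polyVec]⟩)
  calc {Y | polyVec Y ∈ V}.ncard = ((Finset.univ.filter (polyVec · ∈ V)).image polyVec).card := by
        rw [Finset.card_image_of_injective _ polyVec_injective, Set.ncard_eq_toFinset_card']
        simp
    _ ≤ 2 ^ finrank ℝ V' := hcube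
    _ ≤ 2 ^ (finrank ℝ V - 1) := Nat.pow_le_pow_right two_pos hV'

theorem stmt_10_general (n j : ℕ)
    (X : Fin j → (Fin n → Bool)) (hinj : Function.Injective X)
    (hli : LinearIndependent ℝ (fun r : Fin j => polyVec (X r))) :
    Set.ncard {Y : Fin n → Bool | Y ∉ Set.range X ∧
      polyVec Y ∈ Submodule.span ℝ (Set.range (fun r : Fin j => polyVec (X r)))}
      ≤ 2 ^ (j - 1) - j := by
  set V := Submodule.span ℝ (Set.range fun r : Fin j => polyVec (X r))
  have hXV : Set.range X ⊆ {Y | polyVec Y ∈ V} :=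
    Set.range_subset_iff.mpr fun r => Submodule.subset_span ⟨r, rfl⟩
  have hbound := ncard_setOf_polyVec_mem_le V
  rw [finrank_span_eq_card hli, Fintype.card_fin] at hbound
  calc Set.ncard {Y | Y ∉ Set.range X ∧ polyVec Y ∈ V}
      = ({Y | polyVec Y ∈ V} \ Set.range X).ncard := congrArg Set.ncard (Set.ext fun _ => and_comm)
    _ = {Y | polyVec Y ∈ V}.ncard - j := by
        rw [Set.ncard_sdiff hXV, Set.ncard_range_of_injective hinj, Nat.card_eq_fintype_card,
          Fintype.card_fin]
    _ ≤ 2 ^ (j - 1) - j := Nat.sub_le_sub_right hbound j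

theorem stmt_10 (n j : ℕ) (hn : 2 ≤ n) (hj1 : 1 ≤ j) (hj2 : j ≤ n + 1)
    (X : Fin j → (Fin n → Bool)) (hinj : Function.Injective X)
    (hli : LinearIndependent ℝ (fun r : Fin j => polyVec (X r))) :
    Set.ncard {Y : Fin n → Bool | Y ∉ Set.range X ∧
      polyVec Y ∈ Submodule.span ℝ (Set.range (fun r : Fin j => polyVec (X r)))}
      ≤ 2 ^ (j - 1) - j :=
  stmt_10_general n j X hinj hli
end

section
/- For all n ≥ 3 and 2 ≤ k ≤ n, the number of pairs (D₀, D₁) of disjoint nonempty subsets of {0,1}^n such that, writing r_b for the dimension of the real linear span of {(1, x) : x ∈ D_b} ⊆ ℝ^{n+1} (b ∈ {0,1}), one has r₀ ≤ n, r₁ ≤ n, and r₀ + r₁ ≤ 2n + 2 − k, is at most n²·2^{2^{n−1}(1+2^{2−k}) + 2n²}. -/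
open scoped BigOperators

/-!
Write `V(D)` for the span of the vectors `(1, x)`, `x ∈ D`. Splitting `D` along a coordinate on
which two of its points differ gives two halves of strictly smaller rank, so
`|D| ≤ 2 ^ (dim V(D) - 1)`; this applies in particular to the closure `{x | (1, x) ∈ V(D)}`.
A set of rank `r ≤ n` spans the same subspace as some `n`-tuple of its points, so every
admissible pair `(D₀, D₁)` is a pair of subsets of the closures of two such tuples. There are
`2 ^ (2n²)` pairs of tuples, and by convexity of `r ↦ 2 ^ r` under `r₀, r₁ ≤ n`,
`r₀ + r₁ ≤ 2n + 2 - k`, each carries at most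
`2 ^ (2 ^ (r₀ - 1) + 2 ^ (r₁ - 1)) ≤ 2 ^ (2 ^ (n - 1) + 2 ^ (n + 1 - k))` pairs of subsets.
-/

lemma two_pow_pred_add_two_pow_pred {r : ℕ} (hr : 0 < r) :
    2 ^ (r - 1) + 2 ^ (r - 1) = 2 ^ r := by
  rw [← two_mul, ← pow_succ', Nat.sub_add_cancel hr]

lemma two_pow_add_two_pow_le {a b M N : ℕ} (ha : a ≤ M) (hb : b ≤ M) (hab : a + b ≤ M + N) :
    2 ^ a + 2 ^ b ≤ 2 ^ M + 2 ^ N := by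
  have hpow {x y : ℕ} (h : x ≤ y) : 2 ^ x ≤ 2 ^ y := Nat.pow_le_pow_right two_pos h
  rcases le_or_gt a N with haN | haN
  · rw [add_comm (2 ^ M)]; exact add_le_add (hpow haN) (hpow hb)
  rcases le_or_gt b N with hbN | hbN
  · exact add_le_add (hpow ha) (hpow hbN)
  calc 2 ^ a + 2 ^ b ≤ 2 ^ (M - 1) + 2 ^ (M - 1) :=
        add_le_add (hpow (by omega)) (hpow (by omega))
    _ = 2 ^ M := two_pow_pred_add_two_pow_pred (by omega)
    _ ≤ 2 ^ M + 2 ^ N := Nat.le_add_right _ _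

lemma ncard_setOf_subset_and_subset {α β : Type*} {A : Set α} {B : Set β} (hA : A.Finite)
    (hB : B.Finite) :
    {p : Set α × Set β | p.1 ⊆ A ∧ p.2 ⊆ B}.ncard = 2 ^ A.ncard * 2 ^ B.ncard := by
  rw [show {p : Set α × Set β | p.1 ⊆ A ∧ p.2 ⊆ B} = 𝒫 A ×ˢ 𝒫 B from rfl, Set.ncard_prod,
    Set.ncard_powerset A hA, Set.ncard_powerset B hB]

lemma exists_fin_range_subset_span_image_eq {K V ι : Type*} [DivisionRing K] [AddCommGroup V]
    [Module K V] (f : ι → V) {s : Set ι} (hs : s.Finite) (hne : s.Nonempty) {m : ℕ}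
    (hm : Module.finrank K (Submodule.span K (f '' s)) ≤ m) :
    ∃ b : Fin m → ι, Set.range b ⊆ s ∧
      Submodule.span K (f '' Set.range b) = Submodule.span K (f '' s) := by
  classical
  obtain ⟨t, hts, hspan, hli⟩ := exists_linearIndependent K (f '' s)
  have : Fintype t := ((hs.image f).subset hts).fintype
  choose g hgs hfg using fun v : t => hts v.2
  obtain ⟨e⟩ : Nonempty (t ↪ Fin m) := Function.Embedding.nonempty_of_card_le <| by
    rwa [Fintype.card_fin, ← Set.toFinset_card, ← finrank_span_set_eq_card hli, hspan]
  set b : Fin m → ι := Function.extend e g fun _ => hne.some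
  have hrange : Set.range b ⊆ s := by
    refine (Set.range_extend_subset _ _ _).trans (Set.union_subset ?_ ?_)
    · rintro _ ⟨v, rfl⟩; exact hgs v
    · rintro _ ⟨_, -, rfl⟩; exact hne.some_mem
  refine ⟨b, hrange, le_antisymm (Submodule.span_mono (Set.image_mono hrange)) ?_⟩
  rw [← hspan]
  refine Submodule.span_mono fun v hv => ⟨b (e ⟨v, hv⟩), ⟨_, rfl⟩, ?_⟩
  rw [show b (e ⟨v, hv⟩) = g ⟨v, hv⟩ from e.injective.extend_apply _ _ _, hfg]

namespace PolyVec

variable {n : ℕ}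

noncomputable def polySpan (D : Set (Fin n → Bool)) : Submodule ℝ (Option (Fin n) → ℝ) :=
  Submodule.span ℝ (polyVec '' D)

noncomputable def polyRank (D : Set (Fin n → Bool)) : ℕ :=
  Module.finrank ℝ (polySpan D)

lemma polyVec_ne_zero (x : Fin n → Bool) : polyVec x ≠ 0 :=
  fun h => by simpa [polyVec] using congrFun h none

lemma polyRank_pos {D : Set (Fin n → Bool)} (hD : D.Nonempty) : 0 < polyRank D := by
  obtain ⟨x, hx⟩ := hD
  exact Module.finrank_pos_iff_exists_ne_zero.2
    ⟨⟨polyVec x, Submodule.subset_span ⟨x, hx, rfl⟩⟩,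
      fun h => polyVec_ne_zero x (congrArg Subtype.val h)⟩

def coordSubConst (i : Fin n) (c : Bool) : (Option (Fin n) → ℝ) →ₗ[ℝ] ℝ :=
  LinearMap.proj (some i) - (if c then 1 else 0 : ℝ) • LinearMap.proj none

lemma coordSubConst_polyVec_eq_zero_iff (i : Fin n) (c : Bool) (x : Fin n → Bool) :
    coordSubConst i c (polyVec x) = 0 ↔ x i = c := by
  cases hx : x i <;> cases c <;> simp [coordSubConst, polyVec, hx]

lemma polyVec_notMem_polySpan {D : Set (Fin n → Bool)} {i : Fin n} {c : Bool}
    (hD : ∀ x ∈ D, x i = c) {y : Fin n → Bool} (hy : y i ≠ c) :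
    polyVec y ∉ polySpan D := by
  have hker : polySpan D ≤ LinearMap.ker (coordSubConst i c) :=
    Submodule.span_le.2 <| by
      rintro _ ⟨x, hx, rfl⟩
      exact (coordSubConst_polyVec_eq_zero_iff i c x).2 (hD x hx)
  exact fun hmem => hy ((coordSubConst_polyVec_eq_zero_iff i c y).1 (hker hmem))

lemma polyRank_lt_of_forall_eq {D₀ D : Set (Fin n → Bool)} (hsub : D₀ ⊆ D) {i : Fin n}
    {c : Bool} (hD₀ : ∀ x ∈ D₀, x i = c) {y : Fin n → Bool} (hyD : y ∈ D) (hy : y i ≠ c) :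
    polyRank D₀ < polyRank D := by
  refine Submodule.finrank_lt_finrank_of_lt <|
    (Submodule.span_mono (Set.image_mono hsub)).lt_of_ne fun h => ?_
  exact polyVec_notMem_polySpan hD₀ hy <| by
    rw [polySpan, h]; exact Submodule.subset_span ⟨y, hyD, rfl⟩

theorem ncard_le_two_pow_polyRank_sub_one (D : Set (Fin n → Bool)) :
    D.ncard ≤ 2 ^ (polyRank D - 1) := by
  induction hr : polyRank D using Nat.strong_induction_on generalizing D with
  | _ r ih =>
  rcases le_or_gt D.ncard 1 with hD | hD
  · exact hD.trans Nat.one_le_two_pow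
  obtain ⟨a, ha, b, hb, hab⟩ := (Set.one_lt_ncard_iff_nontrivial).1 hD
  obtain ⟨i, hi⟩ := Function.ne_iff.1 hab
  set D₀ := {x ∈ D | x i = a i}
  set D₁ := {x ∈ D | x i = b i}
  have hunion : D₀ ∪ D₁ = D := by
    refine (Set.union_subset (Set.sep_subset _ _) (Set.sep_subset _ _)).antisymm fun x hx => ?_
    have hxi : x i = a i ∨ x i = b i := by
      revert hi; cases x i <;> cases a i <;> cases b i <;> decide
    exact hxi.imp (⟨hx, ·⟩) (⟨hx, ·⟩)
  have hdisj : Disjoint D₀ D₁ := Set.disjoint_left.2 fun x h₀ h₁ => hi (h₀.2.symm.trans h₁.2)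
  have hr₀ : polyRank D₀ < r :=
    hr ▸ polyRank_lt_of_forall_eq (Set.sep_subset _ _) (fun x hx => hx.2) hb (Ne.symm hi)
  have hr₁ : polyRank D₁ < r :=
    hr ▸ polyRank_lt_of_forall_eq (Set.sep_subset _ _) (fun x hx => hx.2) ha hi
  have hpos : 0 < polyRank D₀ := polyRank_pos ⟨a, ha, rfl⟩
  calc D.ncard = D₀.ncard + D₁.ncard := by rw [← Set.ncard_union_eq hdisj, hunion]
    _ ≤ 2 ^ (polyRank D₀ - 1) + 2 ^ (polyRank D₁ - 1) :=
      add_le_add (ih _ hr₀ D₀ rfl) (ih _ hr₁ D₁ rfl)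
    _ ≤ 2 ^ (r - 1 - 1) + 2 ^ (r - 1 - 1) :=
      add_le_add (Nat.pow_le_pow_right two_pos (by omega)) (Nat.pow_le_pow_right two_pos (by omega))
    _ = 2 ^ (r - 1) := two_pow_pred_add_two_pow_pred (by omega)

noncomputable def polyClosure (D : Set (Fin n → Bool)) : Set (Fin n → Bool) :=
  polyVec ⁻¹' polySpan D

lemma subset_polyClosure (D : Set (Fin n → Bool)) : D ⊆ polyClosure D :=
  fun x hx => Submodule.subset_span ⟨x, hx, rfl⟩

lemma polyRank_polyClosure_le (D : Set (Fin n → Bool)) :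
    polyRank (polyClosure D) ≤ polyRank D :=
  Submodule.finrank_mono <| Submodule.span_le.2 <| Set.image_preimage_subset _ _

lemma ncard_polyClosure_le (D : Set (Fin n → Bool)) :
    (polyClosure D).ncard ≤ 2 ^ (polyRank D - 1) :=
  (ncard_le_two_pow_polyRank_sub_one _).trans <|
    Nat.pow_le_pow_right two_pos (Nat.sub_le_sub_right (polyRank_polyClosure_le D) 1)

lemma exists_fin_polySpan_range_eq {D : Set (Fin n → Bool)} (hD : D.Nonempty) {m : ℕ}
    (hm : polyRank D ≤ m) : ∃ b : Fin m → Fin n → Bool, polySpan (Set.range b) = polySpan D :=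
  (exists_fin_range_subset_span_image_eq polyVec D.toFinite hD hm).imp fun _ h => h.2

lemma ncard_setOf_subset_polyClosure_le (A B : Set (Fin n → Bool)) :
    {p : Set (Fin n → Bool) × Set (Fin n → Bool) |
      p.1 ⊆ polyClosure A ∧ p.2 ⊆ polyClosure B}.ncard
      ≤ 2 ^ (2 ^ (polyRank A - 1) + 2 ^ (polyRank B - 1)) := by
  rw [ncard_setOf_subset_and_subset (Set.toFinite _) (Set.toFinite _), pow_add]
  exact Nat.mul_le_mul (Nat.pow_le_pow_right two_pos (ncard_polyClosure_le A))
    (Nat.pow_le_pow_right two_pos (ncard_polyClosure_le B))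

def rankBoundedPairs (n k : ℕ) : Set (Set (Fin n → Bool) × Set (Fin n → Bool)) :=
  {Dp | Dp.1.Nonempty ∧ Dp.2.Nonempty ∧ Disjoint Dp.1 Dp.2 ∧
    polyRank Dp.1 ≤ n ∧ polyRank Dp.2 ≤ n ∧ (polyRank Dp.1 : ℤ) + polyRank Dp.2 ≤ 2 * n + 2 - k}

theorem ncard_rankBoundedPairs_le {k : ℕ} (hkn : k ≤ n + 1) :
    (rankBoundedPairs n k).ncard ≤ 2 ^ (2 * n ^ 2) * 2 ^ (2 ^ (n - 1) + 2 ^ (n + 1 - k)) := by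
  classical
  let T := (Finset.univ : Finset ((Fin n → Fin n → Bool) × (Fin n → Fin n → Bool))).filter
    fun b => polyRank (Set.range b.1) ≤ n ∧ polyRank (Set.range b.2) ≤ n ∧
      polyRank (Set.range b.1) + polyRank (Set.range b.2) + k ≤ 2 * n + 2
  let piece (b : (Fin n → Fin n → Bool) × (Fin n → Fin n → Bool)) :
      Set (Set (Fin n → Bool) × Set (Fin n → Bool)) :=
    {p | p.1 ⊆ polyClosure (Set.range b.1) ∧ p.2 ⊆ polyClosure (Set.range b.2)}
  have hcover : rankBoundedPairs n k ⊆ ⋃ b ∈ T, piece b := by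
    rintro ⟨D₀, D₁⟩ ⟨hne₀, hne₁, -, hr₀, hr₁, hsum⟩
    dsimp only at hne₀ hne₁ hr₀ hr₁ hsum
    obtain ⟨b₀, hb₀⟩ := exists_fin_polySpan_range_eq hne₀ hr₀
    obtain ⟨b₁, hb₁⟩ := exists_fin_polySpan_range_eq hne₁ hr₁
    have hrk₀ : polyRank (Set.range b₀) = polyRank D₀ := by rw [polyRank, hb₀, polyRank]
    have hrk₁ : polyRank (Set.range b₁) = polyRank D₁ := by rw [polyRank, hb₁, polyRank]
    refine Set.mem_iUnion₂.2 ⟨(b₀, b₁), Finset.mem_filter.2 ⟨Finset.mem_univ _, ?_⟩, ?_, ?_⟩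
    · dsimp only
      omega
    · rw [polyClosure, hb₀]; exact subset_polyClosure D₀
    · rw [polyClosure, hb₁]; exact subset_polyClosure D₁
  have hpiece : ∀ b ∈ T, (piece b).ncard ≤ 2 ^ (2 ^ (n - 1) + 2 ^ (n + 1 - k)) := by
    intro b hb
    simp only [T, Finset.mem_filter, Finset.mem_univ, true_and] at hb
    refine (ncard_setOf_subset_polyClosure_le _ _).trans <| Nat.pow_le_pow_right two_pos <|
      two_pow_add_two_pow_le (by omega) (by omega) (by omega)
  have hcard : Fintype.card ((Fin n → Fin n → Bool) × (Fin n → Fin n → Bool)) =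
      2 ^ (2 * n ^ 2) := by
    simp only [Fintype.card_prod, Fintype.card_fun, Fintype.card_bool, Fintype.card_fin,
      ← pow_mul, ← pow_add]
    ring_nf
  calc (rankBoundedPairs n k).ncard ≤ (⋃ b ∈ T, piece b).ncard := Set.ncard_le_ncard hcover
    _ ≤ ∑ b ∈ T, (piece b).ncard := T.set_ncard_biUnion_le piece
    _ ≤ T.card • 2 ^ (2 ^ (n - 1) + 2 ^ (n + 1 - k)) := Finset.sum_le_card_nsmul _ _ _ hpiece
    _ ≤ 2 ^ (2 * n ^ 2) * 2 ^ (2 ^ (n - 1) + 2 ^ (n + 1 - k)) := by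
      rw [smul_eq_mul, ← hcard]
      exact Nat.mul_le_mul_right _ (Finset.card_filter_le _ _)

end PolyVec

lemma two_rpow_exponent_eq_natCast {n k : ℕ} (hn : 1 ≤ n) (hkn : k ≤ n + 1) :
    (2 : ℝ) ^ ((n : ℝ) - 1) * (1 + (2 : ℝ) ^ ((2 : ℝ) - (k : ℝ))) + 2 * (n : ℝ) ^ 2
      = ((2 ^ (n - 1) + 2 ^ (n + 1 - k) + 2 * n ^ 2 : ℕ) : ℝ) := by
  have hsub : (n : ℝ) - 1 = ((n - 1 : ℕ) : ℝ) := by rw [Nat.cast_sub hn, Nat.cast_one]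
  have hadd : (n : ℝ) - 1 + (2 - k) = ((n + 1 - k : ℕ) : ℝ) := by
    rw [Nat.cast_sub hkn]; push_cast; ring
  rw [mul_one_add, ← Real.rpow_add two_pos, hadd, hsub, Real.rpow_natCast, Real.rpow_natCast]
  push_cast
  ring

theorem stmt_12_general (n k : ℕ) (hn : 3 ≤ n) (hkn : k ≤ n) :
    (Set.ncard {Dp : Set (Fin n → Bool) × Set (Fin n → Bool) |
        Dp.1.Nonempty ∧ Dp.2.Nonempty ∧ Disjoint Dp.1 Dp.2 ∧
        Module.finrank ℝ (Submodule.span ℝ (polyVec '' Dp.1)) ≤ n ∧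
        Module.finrank ℝ (Submodule.span ℝ (polyVec '' Dp.2)) ≤ n ∧
        (Module.finrank ℝ (Submodule.span ℝ (polyVec '' Dp.1)) : ℤ)
          + (Module.finrank ℝ (Submodule.span ℝ (polyVec '' Dp.2)) : ℤ)
          ≤ 2 * n + 2 - k} : ℝ)
      ≤ (n : ℝ) ^ 2 *
        2 ^ ((2 : ℝ) ^ ((n : ℝ) - 1) * (1 + (2 : ℝ) ^ ((2 : ℝ) - (k : ℝ)))
              + 2 * (n : ℝ) ^ 2) := by
  change ((PolyVec.rankBoundedPairs n k).ncard : ℝ) ≤ _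
  rw [two_rpow_exponent_eq_natCast (by omega) (by omega), Real.rpow_natCast]
  have hcount : ((PolyVec.rankBoundedPairs n k).ncard : ℝ)
      ≤ 2 ^ (2 ^ (n - 1) + 2 ^ (n + 1 - k) + 2 * n ^ 2) := by
    rw [add_comm _ (2 * n ^ 2), pow_add]
    exact_mod_cast PolyVec.ncard_rankBoundedPairs_le (by omega)
  have hn2 : (1 : ℝ) ≤ (n : ℝ) ^ 2 := one_le_pow₀ (by exact_mod_cast (by omega : 1 ≤ n))
  exact hcount.trans (le_mul_of_one_le_left (by positivity) hn2)

theorem stmt_12 (n k : ℕ) (hn : 3 ≤ n) (hk2 : 2 ≤ k) (hkn : k ≤ n) :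
    (Set.ncard {Dp : Set (Fin n → Bool) × Set (Fin n → Bool) |
        Dp.1.Nonempty ∧ Dp.2.Nonempty ∧ Disjoint Dp.1 Dp.2 ∧
        Module.finrank ℝ (Submodule.span ℝ (polyVec '' Dp.1)) ≤ n ∧
        Module.finrank ℝ (Submodule.span ℝ (polyVec '' Dp.2)) ≤ n ∧
        (Module.finrank ℝ (Submodule.span ℝ (polyVec '' Dp.1)) : ℤ)
          + (Module.finrank ℝ (Submodule.span ℝ (polyVec '' Dp.2)) : ℤ)
          ≤ 2 * n + 2 - k} : ℝ)
      ≤ (n : ℝ) ^ 2 *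
        2 ^ ((2 : ℝ) ^ ((n : ℝ) - 1) * (1 + (2 : ℝ) ^ ((2 : ℝ) - (k : ℝ)))
              + 2 * (n : ℝ) ^ 2) :=
  stmt_12_general n k hn hkn
end

section
/- Let f : D → {0,1} be an n-bit partial Boolean function that depends on n bits. Then for every k ∈ {1,…,n} there exist X, X' ∈ D that differ exactly in the k-th coordinate and satisfy f(X) ≠ f(X'). -/
open scoped BigOperators

/-! If `f` never flips along an edge in direction `k` inside `D`, move every point of the face
`x_k = 0` lying outside `D` to its `k`-neighbour and interpolate the resulting values of `f`
multilinearly on that face. The interpolant represents `f` on `D` and avoids the variable `x_k`,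
so it uses fewer than `n` variables. -/

namespace MvPolynomial

variable {σ R : Type*} [CommRing R]

noncomputable def litPoly (b : Bool) (i : σ) : MvPolynomial σ R :=
  if b then X i else 1 - X i

lemma eval_litPoly (b : Bool) (i : σ) (x : σ → Bool) :
    eval (fun j => if x j then (1 : R) else 0) (litPoly b i) = if b = x i then 1 else 0 := by
  cases b <;> cases hx : x i <;> simp [litPoly, hx]

lemma vars_litPoly_subset [DecidableEq σ] [Nontrivial R] (b : Bool) (i : σ) :
    (litPoly b i : MvPolynomial σ R).vars ⊆ {i} := by
  cases b
  · refine (vars_sub_subset (p := 1)).trans ?_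
    simp [vars_one, vars_X]
  · simp [litPoly, vars_X]

lemma degreeOf_litPoly_le [DecidableEq σ] [Nontrivial R] (b : Bool) (i j : σ) :
    (litPoly b j : MvPolynomial σ R).degreeOf i ≤ if i = j then 1 else 0 := by
  cases b
  · refine (degreeOf_sub_le i _ _).trans ?_
    simp [degreeOf_X]
  · simp [litPoly, degreeOf_X]

variable [Fintype σ] [DecidableEq σ]

noncomputable def subcubeInterp (S : Finset σ) (g : (σ → Bool) → R) : MvPolynomial σ R :=
  ∑ y ∈ Finset.univ.filter (fun y : σ → Bool => ∀ i ∉ S, y i = false),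
    C (g y) * ∏ i ∈ S, litPoly (y i) i

lemma vars_subcubeInterp_subset [Nontrivial R] (S : Finset σ) (g : (σ → Bool) → R) :
    (subcubeInterp S g).vars ⊆ S := by
  refine (vars_sum_subset _ _).trans (Finset.biUnion_subset.2 fun y _ => ?_)
  refine (vars_mul _ _).trans (Finset.union_subset (by simp [vars_C]) ?_)
  refine (vars_prod _).trans (Finset.biUnion_subset.2 fun i hi => ?_)
  exact (vars_litPoly_subset _ i).trans (Finset.singleton_subset_iff.2 hi)

lemma degreeOf_subcubeInterp_le [Nontrivial R] (S : Finset σ) (g : (σ → Bool) → R) (i : σ) :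
    (subcubeInterp S g).degreeOf i ≤ 1 := by
  refine (degreeOf_sum_le _ _ _).trans (Finset.sup_le fun y _ => ?_)
  refine (degreeOf_mul_le _ _ _).trans ?_
  rw [degreeOf_C, zero_add]
  calc (∏ j ∈ S, litPoly (y j) j).degreeOf i
      ≤ ∑ j ∈ S, (litPoly (y j) j : MvPolynomial σ R).degreeOf i := degreeOf_prod_le _ _ _
    _ ≤ ∑ j ∈ S, if i = j then 1 else 0 :=
        Finset.sum_le_sum fun j _ => degreeOf_litPoly_le _ _ _
    _ ≤ 1 := by rw [Finset.sum_ite_eq]; split_ifs <;> omega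

lemma eval_subcubeInterp (S : Finset σ) (g : (σ → Bool) → R) (x : σ → Bool) :
    eval (fun j => if x j then (1 : R) else 0) (subcubeInterp S g)
      = g (fun i => if i ∈ S then x i else false) := by
  set y₀ : σ → Bool := fun i => if i ∈ S then x i else false
  have hy₀ : y₀ ∈ Finset.univ.filter (fun y : σ → Bool => ∀ i ∉ S, y i = false) := by
    simp +contextual [y₀]
  rw [subcubeInterp, map_sum, Finset.sum_eq_single_of_mem y₀ hy₀]
  · simp +contextual [map_prod, eval_litPoly, y₀]
  · intro y hy hne
    obtain ⟨i, hi, hyi⟩ : ∃ i ∈ S, y i ≠ x i := by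
      by_contra! hall
      apply hne
      funext j
      by_cases hjS : j ∈ S
      · simp [y₀, hjS, hall j hjS]
      · simp [y₀, hjS, (Finset.mem_filter.1 hy).2 j hjS]
    rw [map_mul, map_prod, Finset.prod_eq_zero hi (by rw [eval_litPoly, if_neg hyi]), mul_zero]

end MvPolynomial

section Insensitive

variable {σ : Type*} [DecidableEq σ]

open Classical in
noncomputable def liftToDomain (D : Set (σ → Bool)) (k : σ) (y : σ → Bool) : σ → Bool :=
  if y ∈ D then y else Function.update y k true

variable {D : Set (σ → Bool)} {f : (σ → Bool) → Bool} {k : σ}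

lemma apply_liftToDomain_update_false
    (hk : ∀ X ∈ D, Function.update X k (!(X k)) ∈ D → f X = f (Function.update X k (!(X k))))
    {X : σ → Bool} (hX : X ∈ D) :
    f (liftToDomain D k (Function.update X k false)) = f X := by
  cases hXk : X k
  · simp [liftToDomain, ← hXk, hX]
  · have hflip : Function.update X k (!(X k)) = Function.update X k false := by simp [hXk]
    by_cases hD : Function.update X k false ∈ D
    · rw [liftToDomain, if_pos hD, ← hflip, hk X hX (hflip ▸ hD)]
    · simp [liftToDomain, hD, ← hXk]

end Insensitive

open MvPolynomial

lemma represents_of_insensitive {n : ℕ} {D : Set (Fin n → Bool)} {f : (Fin n → Bool) → Bool}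
    {k : Fin n} (hk : ∀ X ∈ D, Function.update X k (!(X k)) ∈ D →
      f X = f (Function.update X k (!(X k)))) :
    Represents (subcubeInterp (Finset.univ.erase k) fun y =>
      if f (liftToDomain D k y) then 1 else 0) D f := by
  intro X hX
  have hproj : (fun i => if i ∈ Finset.univ.erase k then X i else false)
      = Function.update X k false := by
    funext i
    by_cases hik : i = k <;> simp [hik]
  rw [eval_subcubeInterp, hproj, apply_liftToDomain_update_false hk hX]

theorem stmt_16 (n : ℕ) (D : Set (Fin n → Bool)) (f : (Fin n → Bool) → Bool)
    (hdep : DependsOnBits D f n) :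
    ∀ k : Fin n, ∃ X ∈ D, Function.update X k (!(X k)) ∈ D ∧
      f X ≠ f (Function.update X k (!(X k))) := by
  intro k
  by_contra! hk
  set q := subcubeInterp (Finset.univ.erase k) fun y =>
    if f (liftToDomain D k y) then (1 : ℝ) else 0
  have hmin : n ≤ q.vars.card :=
    hdep.2 ⟨q, degreeOf_subcubeInterp_le _ _, represents_of_insensitive hk, rfl⟩
  have hvars : q.vars.card < n :=
    calc q.vars.card ≤ (Finset.univ.erase k).card :=
          Finset.card_le_card (vars_subcubeInterp_subset _ _)
      _ < n := by simpa using Finset.card_erase_lt_of_mem (Finset.mem_univ k)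
  omega
end
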